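/- Let (V, ω) be a finite-dimensional symplectic vector space and let C, C' ⊆ V be two coisotropic linear subspaces such that C ∩ C' is a symplectic subspace and dim C + dim C' = dim V + dim(C ∩ C'). Then there exists a symplectic basis (e_1,...,e_n, f_1,...,f_n) of V and a subset A ⊆ {1,...,n} such that C = span of all basis vectors except {f_α : α ∈ A} and C' = span of all basis vectors except {e_α : α ∈ A}; in particular the annihilating linear constraints defining C and C' can be chosen as q_α = 0 (α ∈ A) and p^α = 0 (α ∈ A) respectively, which are canonically conjugate: {q_α, p^β} = δ_α^β. -/

import Mathlib

/-!
Put `D = C ⊓ C'`, `E = C^ω` and `F = C'^ω`. Coisotropy makes `E ⊆ C` and `F ⊆ C'` isotropic, and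
both are `ω`-orthogonal to `D`. The restriction of `ω` to `E × F` is a perfect pairing: a vector of
`E` that annihilates `F` lies in `E ⊓ F^ω = E ⊓ C' ⊆ D`, and being orthogonal to `D ⊆ C` it vanishes
because `D` is symplectic. Hence `dim E = dim F`, and the dimension hypothesis becomes
`dim D + dim E + dim F = dim V`. A Darboux basis of `D` together with `ω`-dual bases `e` of `E` and
`f` of `F` is therefore a symplectic basis of `V`. Since `C = E^ω`, a vector lies in `C` iff it
pairs to zero with every `e α`, i.e. iff its `f`-coordinates vanish; dually for `C' = F^ω`.
-/

open Module Submodule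

theorem Module.Basis.mem_span_image_iff_coord {R M ι : Type*} [CommRing R] [AddCommGroup M]
    [Module R M] (b : Basis ι R M) (s : Set ι) (v : M) :
    v ∈ span R (b '' s) ↔ ∀ i ∉ s, b.coord i v = 0 := by
  rw [b.mem_span_image, Finsupp.support_subset_iff]
  rfl

theorem LinearMap.IsPerfPair.exists_basis_basis_apply_eq_ite {K M N : Type*} [Field K]
    [AddCommGroup M] [Module K M] [AddCommGroup N] [Module K N] [FiniteDimensional K M]
    (p : M →ₗ[K] N →ₗ[K] K) [p.IsPerfPair] :
    ∃ (e : Basis (Fin (finrank K M)) K M) (f : Basis (Fin (finrank K M)) K N),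
      ∀ i j, p (e i) (f j) = if i = j then 1 else 0 := by
  let e := Module.finBasis K M
  refine ⟨e, e.dualBasis.map p.flip.toPerfPair.symm, fun i j => ?_⟩
  simp [Finsupp.single_apply]

namespace LinearMap.BilinForm

section CommRing

variable {R V ι : Type*} [CommRing R] [AddCommGroup V] [Module R V] {ω : LinearMap.BilinForm R V}

theorem mem_orthogonal_iff_forall_basis {E : Submodule R V} (e : Basis ι R E) {v : V} :
    v ∈ ω.orthogonal E ↔ ∀ i, ω (e i) v = 0 :=
  ⟨fun hv i => hv _ (e i).2, fun h x hx =>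
    LinearMap.congr_fun (e.ext (f₁ := (ω.flip v).domRestrict E) (f₂ := 0) h) ⟨x, hx⟩⟩

theorem orthogonal_inf_eq_bot_of_coisotropic (hω : ω.IsRefl) {C C' : Submodule R V}
    (hC : ω.orthogonal C ≤ C) (hD : (ω.restrict (C ⊓ C')).Nondegenerate) :
    ω.orthogonal C ⊓ C' = ⊥ := by
  refine eq_bot_iff.2 fun x ⟨hx, hx'⟩ => ?_
  have := hD.1 ⟨x, hC hx, hx'⟩ fun y => hω _ _ (hx y y.2.1)
  exact congrArg Subtype.val this

variable [DecidableEq ι]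

structure IsSymplecticFamily (ω : LinearMap.BilinForm R V) (g : ι ⊕ ι → V) : Prop where
  inl_inl : ∀ i j, ω (g (Sum.inl i)) (g (Sum.inl j)) = 0
  inr_inr : ∀ i j, ω (g (Sum.inr i)) (g (Sum.inr j)) = 0
  inl_inr : ∀ i j, ω (g (Sum.inl i)) (g (Sum.inr j)) = if i = j then 1 else 0

variable {g : ι ⊕ ι → V}

namespace IsSymplecticFamily

theorem of_restrict {W : Submodule R V} {g : ι ⊕ ι → W}
    (h : (ω.restrict W).IsSymplecticFamily g) : ω.IsSymplecticFamily fun x => (g x : V) :=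
  ⟨h.inl_inl, h.inr_inr, h.inl_inr⟩

theorem apply_sum_inr [Fintype ι] (h : ω.IsSymplecticFamily g) (c : ι ⊕ ι → R) (j : ι) :
    ω (∑ x, c x • g x) (g (Sum.inr j)) = c (Sum.inl j) := by
  simp [Fintype.sum_sum_type, h.inl_inr, h.inr_inr]

theorem apply_inl_sum [Fintype ι] (h : ω.IsSymplecticFamily g) (c : ι ⊕ ι → R) (j : ι) :
    ω (g (Sum.inl j)) (∑ x, c x • g x) = c (Sum.inr j) := by
  simp [Fintype.sum_sum_type, h.inl_inl, h.inl_inr]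

theorem linearIndependent [Fintype ι] (h : ω.IsSymplecticFamily g) : LinearIndependent R g := by
  refine Fintype.linearIndependent_iff.2 fun c hc => ?_
  rintro (j | j)
  · rw [← h.apply_sum_inr c j, hc, map_zero, LinearMap.zero_apply]
  · rw [← h.apply_inl_sum c j, hc, map_zero]

theorem disjoint_span_orthogonal [Fintype ι] (h : ω.IsSymplecticFamily g) (hω : ω.IsRefl) :
    Disjoint (span R (Set.range g)) (ω.orthogonal (span R (Set.range g))) := by
  refine Submodule.disjoint_def.2 fun x hx hx' => ?_
  obtain ⟨c, rfl⟩ := (mem_span_range_iff_exists_fun R).1 hx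
  have hc : c = 0 := by
    ext (j | j)
    · rw [← h.apply_sum_inr c j]
      exact hω _ _ (hx' _ (subset_span (Set.mem_range_self _)))
    · rw [← h.apply_inl_sum c j]
      exact hx' _ (subset_span (Set.mem_range_self _))
  simp [hc]

theorem coord_inr {b : Basis (ι ⊕ ι) R V} (h : ω.IsSymplecticFamily b) (j : ι) (v : V) :
    b.coord (Sum.inr j) v = ω (b (Sum.inl j)) v := by
  refine LinearMap.congr_fun (b.ext fun x => ?_) v
  rcases x with i | i <;> simp [h.inl_inl, h.inl_inr, Finsupp.single_apply, eq_comm]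

theorem coord_inl {b : Basis (ι ⊕ ι) R V} (h : ω.IsSymplecticFamily b) (j : ι) (v : V) :
    b.coord (Sum.inl j) v = ω v (b (Sum.inr j)) := by
  refine LinearMap.congr_fun (b.ext (f₂ := ω.flip (b (Sum.inr j))) fun x => ?_) v
  rcases x with i | i <;> simp [h.inr_inr, h.inl_inr, Finsupp.single_apply]

theorem append {m k : ℕ} {g₁ : Fin m ⊕ Fin m → V} {g₂ : Fin k ⊕ Fin k → V}
    (h₁ : ω.IsSymplecticFamily g₁) (h₂ : ω.IsSymplecticFamily g₂) (hω : ω.IsRefl)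
    (h₁₂ : ∀ x y, ω (g₁ x) (g₂ y) = 0) :
    ω.IsSymplecticFamily (Sum.elim (Fin.append (g₁ ∘ Sum.inl) (g₂ ∘ Sum.inl))
      (Fin.append (g₁ ∘ Sum.inr) (g₂ ∘ Sum.inr))) := by
  have h₂₁ : ∀ x y, ω (g₂ y) (g₁ x) = 0 := fun x y => hω _ _ (h₁₂ x y)
  have hne : ∀ (i : Fin m) (j : Fin k), Fin.castAdd k i ≠ Fin.natAdd m j := fun i j h => by
    have := congrArg Fin.val h
    simp only [Fin.val_castAdd, Fin.val_natAdd] at this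
    omega
  constructor <;> intro i j <;> induction i using Fin.addCases <;>
    induction j using Fin.addCases <;>
    simp [h₁.inl_inl, h₁.inr_inr, h₁.inl_inr, h₂.inl_inl, h₂.inr_inr, h₂.inl_inr, h₁₂, h₂₁, hne,
      (hne _ _).symm]

end IsSymplecticFamily

end CommRing

section Field

variable {K V : Type*} [Field K] [AddCommGroup V] [Module K V] {ω : LinearMap.BilinForm K V}

theorem isSymplecticFamily_pair (hω : ω.IsAlt) {v u : V} (h : ω v u = 1) :
    ω.IsSymplecticFamily (Sum.elim (fun _ : Fin 1 => v) (fun _ : Fin 1 => u)) :=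
  ⟨fun _ _ => hω v, fun _ _ => hω u, fun i j => by simp [Subsingleton.elim i j, h]⟩

variable [FiniteDimensional K V]

theorem exists_isSymplecticFamily (hω : ω.IsAlt) (hnd : ω.Nondegenerate) :
    ∃ n, ∃ g : Fin n ⊕ Fin n → V, ω.IsSymplecticFamily g ∧ 2 * n = finrank K V := by
  induction hN : finrank K V using Nat.strong_induction_on generalizing V with
  | _ N ih =>
  rcases subsingleton_or_nontrivial V with hV | hV
  · exact ⟨0, Sum.elim Fin.elim0 Fin.elim0, ⟨fun i => i.elim0, fun i => i.elim0, fun i => i.elim0⟩,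
      by simp [← hN, finrank_zero_of_subsingleton]⟩
  have hrefl := hω.isRefl
  obtain ⟨v, hv⟩ := exists_ne (0 : V)
  obtain ⟨w, hw⟩ : ∃ w, ω v w ≠ 0 := not_forall.1 fun h => hv (hnd.1 v h)
  have hvu : ω v ((ω v w)⁻¹ • w) = 1 := by simp [hw]
  have hpair := isSymplecticFamily_pair hω hvu
  set P := span K (Set.range (Sum.elim (fun _ : Fin 1 => v) (fun _ : Fin 1 => (ω v w)⁻¹ • w)))
  have hcompl : IsCompl P (ω.orthogonal P) :=
    (isCompl_orthogonal_iff_disjoint hrefl).2 (hpair.disjoint_span_orthogonal hrefl)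
  have hnd' : (ω.restrict (ω.orthogonal P)).Nondegenerate := by
    rw [restrict_nondegenerate_iff_isCompl_orthogonal hrefl, orthogonal_orthogonal hnd hrefl]
    exact hcompl.symm
  have hP : finrank K P = 2 := by simp [P, finrank_span_eq_card hpair.linearIndependent]
  have hP' := finrank_orthogonal hnd P
  have hPV := P.finrank_le
  obtain ⟨m, g, hg, hm⟩ :=
    ih _ (by omega) (ω := ω.restrict (ω.orthogonal P)) (fun x => hω x) hnd' rfl
  exact ⟨1 + m, _, hpair.append hg.of_restrict hrefl
    (fun x y => (g y).2 _ (subset_span (Set.mem_range_self x))), by omega⟩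

theorem mem_iff_forall_basis_orthogonal {ι : Type*} (hnd : ω.Nondegenerate) (hω : ω.IsRefl)
    {C : Submodule K V} (e : Basis ι K (ω.orthogonal C)) {v : V} :
    v ∈ C ↔ ∀ i, ω (e i) v = 0 := by
  rw [← mem_orthogonal_iff_forall_basis e, orthogonal_orthogonal hnd hω]

theorem isPerfPair_domRestrict₁₂_orthogonal (hω : ω.IsRefl) (hnd : ω.Nondegenerate)
    {C C' : Submodule K V} (hC : ω.orthogonal C ≤ C) (hC' : ω.orthogonal C' ≤ C')
    (hD : (ω.restrict (C ⊓ C')).Nondegenerate) :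
    (ω.domRestrict₁₂ (ω.orthogonal C) (ω.orthogonal C')).IsPerfPair := by
  have hE := orthogonal_inf_eq_bot_of_coisotropic hω hC hD
  have hF := orthogonal_inf_eq_bot_of_coisotropic hω hC' (inf_comm C C' ▸ hD)
  refine .of_injective ((injective_iff_map_eq_zero _).2 fun x hx => ?_)
    ((injective_iff_map_eq_zero _).2 fun y hy => ?_)
  · have hxC' : (x : V) ∈ C' := by
      rw [← orthogonal_orthogonal hnd hω C']
      exact fun y hy => hω _ _ (LinearMap.congr_fun hx ⟨y, hy⟩)
    exact Subtype.ext ((mem_bot K).1 (hE.le ⟨x.2, hxC'⟩))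
  · have hyC : (y : V) ∈ C := by
      rw [← orthogonal_orthogonal hnd hω C]
      exact fun x hx => LinearMap.congr_fun hy ⟨x, hx⟩
    exact Subtype.ext ((mem_bot K).1 (hF.le ⟨y.2, hyC⟩))

theorem exists_isSymplecticFamily_of_coisotropic (hω : ω.IsAlt) (hnd : ω.Nondegenerate)
    {C C' : Submodule K V} (hC : ω.orthogonal C ≤ C) (hC' : ω.orthogonal C' ≤ C')
    (hD : (ω.restrict (C ⊓ C')).Nondegenerate)
    (hdim : finrank K C + finrank K C' = finrank K V + finrank K ↥(C ⊓ C')) :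
    ∃ m k, ∃ g : Fin (m + k) ⊕ Fin (m + k) → V, ω.IsSymplecticFamily g ∧
      2 * (m + k) = finrank K V ∧
      (∀ v, v ∈ C ↔ ∀ α, ω (g (Sum.inl (Fin.natAdd m α))) v = 0) ∧
      (∀ v, v ∈ C' ↔ ∀ α, ω v (g (Sum.inr (Fin.natAdd m α))) = 0) := by
  have hrefl := hω.isRefl
  obtain ⟨m, gD, hgD, hm⟩ :=
    exists_isSymplecticFamily (ω := ω.restrict (C ⊓ C')) (fun x => hω x) hD
  have := isPerfPair_domRestrict₁₂_orthogonal hrefl hnd hC hC' hD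
  obtain ⟨e, f, hef⟩ :=
    LinearMap.IsPerfPair.exists_basis_basis_apply_eq_ite
      (ω.domRestrict₁₂ (ω.orthogonal C) (ω.orthogonal C'))
  have hEF : ω.IsSymplecticFamily (Sum.elim (fun α => (e α : V)) (fun α => (f α : V))) :=
    ⟨fun i j => (e j).2 _ (hC (e i).2), fun i j => (f j).2 _ (hC' (f i).2), hef⟩
  have hcross : ∀ x y, ω (gD x) (Sum.elim (fun α => (e α : V)) (fun α => (f α : V)) y) = 0 := by
    rintro x (α | α)
    exacts [(e α).2 _ (gD x).2.1, (f α).2 _ (gD x).2.2]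
  refine ⟨m, _, _, hgD.of_restrict.append hEF hrefl hcross, ?_, fun v => ?_, fun v => ?_⟩
  · have := finrank_of_isPerfPair (ω.domRestrict₁₂ (ω.orthogonal C) (ω.orthogonal C'))
    have := finrank_orthogonal hnd C
    have := finrank_orthogonal hnd C'
    have := C.finrank_le
    have := C'.finrank_le
    omega
  · simpa using mem_iff_forall_basis_orthogonal hnd hrefl e
  · simpa [hrefl.eq_iff] using mem_iff_forall_basis_orthogonal hnd hrefl f

end Field

end LinearMap.BilinForm

/-- If `C, C'` are coisotropic subspaces of a finite-dimensional
symplectic vector space `(V,ω)` whose intersection is symplectic and whose dimensions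
satisfy `dim C + dim C' = dim V + dim (C ∩ C')`, then there is a symplectic basis
`(e_1,…,e_n,f_1,…,f_n)` and a subset `A ⊆ {1,…,n}` such that `C` is spanned by all
basis vectors except the `f_α (α ∈ A)` and `C'` by all except the `e_α (α ∈ A)`;
equivalently, `C` and `C'` are cut out by the canonically conjugate coordinate
constraints `q_α = 0` resp. `p^α = 0` (α ∈ A). -/
theorem stmt_3 {V : Type*} [AddCommGroup V] [Module ℝ V] [FiniteDimensional ℝ V]
    (ω : LinearMap.BilinForm ℝ V)
    (halt : ∀ v : V, ω v v = 0)
    (hnondeg : ∀ v : V, (∀ w : V, ω v w = 0) → v = 0)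
    (C C' : Submodule ℝ V)
    (hC : ∀ v : V, (∀ w ∈ C, ω v w = 0) → v ∈ C)
    (hC' : ∀ v : V, (∀ w ∈ C', ω v w = 0) → v ∈ C')
    (hsymp : ∀ v ∈ C ⊓ C', (∀ w ∈ C ⊓ C', ω v w = 0) → v = 0)
    (hdim : Module.finrank ℝ C + Module.finrank ℝ C'
              = Module.finrank ℝ V + Module.finrank ℝ (C ⊓ C' : Submodule ℝ V)) :
    ∃ (n : ℕ) (b : Module.Basis (Fin n ⊕ Fin n) ℝ V) (A : Finset (Fin n)),
      (∀ i j, ω (b (Sum.inl i)) (b (Sum.inl j)) = 0) ∧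
      (∀ i j, ω (b (Sum.inr i)) (b (Sum.inr j)) = 0) ∧
      (∀ i j, ω (b (Sum.inl i)) (b (Sum.inr j)) = if i = j then 1 else 0) ∧
      C = Submodule.span ℝ (⇑b '' {x : Fin n ⊕ Fin n | ∀ a ∈ A, x ≠ Sum.inr a}) ∧
      C' = Submodule.span ℝ (⇑b '' {x : Fin n ⊕ Fin n | ∀ a ∈ A, x ≠ Sum.inl a}) ∧
      (∀ v : V, v ∈ C ↔ ∀ a ∈ A, b.coord (Sum.inr a) v = 0) ∧
      (∀ v : V, v ∈ C' ↔ ∀ a ∈ A, b.coord (Sum.inl a) v = 0) := by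
  have hω : ω.IsAlt := halt
  have hrefl := hω.isRefl
  have hnd : ω.Nondegenerate := hrefl.nondegenerate_iff_separatingLeft.2 hnondeg
  have hDalt : (ω.restrict (C ⊓ C')).IsAlt := fun x => hω x
  have hD : (ω.restrict (C ⊓ C')).Nondegenerate :=
    hDalt.isRefl.nondegenerate_iff_separatingLeft.2
      fun x hx => Subtype.ext (hsymp x x.2 fun w hw => hx ⟨w, hw⟩)
  obtain ⟨m, k, g, hg, hcard, hgC, hgC'⟩ :=
    ω.exists_isSymplecticFamily_of_coisotropic hω hnd
      (fun v hv => hC v fun w hw => hrefl _ _ (hv w hw))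
      (fun v hv => hC' v fun w hw => hrefl _ _ (hv w hw)) hD hdim
  obtain ⟨b, rfl⟩ : ∃ b : Basis _ ℝ V, ⇑b = g :=
    ⟨basisOfLinearIndependentOfCardEqFinrank' g hg.linearIndependent
      (by simpa [two_mul] using hcard), coe_basisOfLinearIndependentOfCardEqFinrank' ..⟩
  set A := Finset.univ.image (Fin.natAdd m : Fin k → Fin (m + k))
  have hbC : ∀ v, v ∈ C ↔ ∀ a ∈ A, b.coord (Sum.inr a) v = 0 := by
    simp [A, hg.coord_inr, hgC]
  have hbC' : ∀ v, v ∈ C' ↔ ∀ a ∈ A, b.coord (Sum.inl a) v = 0 := by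
    simp [A, hg.coord_inl, hgC']
  refine ⟨m + k, b, A, hg.inl_inl, hg.inr_inr, hg.inl_inr, ?_, ?_, hbC, hbC'⟩ <;> ext v
  · rw [b.mem_span_image_iff_coord, hbC]
    simp [A]
  · rw [b.mem_span_image_iff_coord, hbC']
    simp [A]
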